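/- arXiv:1909.08990 — 3 statements merged into one kernel-verified Lean document; each statement's English description precedes it below -/
import Mathlib

section
/- Let q be a prime power and t a positive integer. The number N_q(t) of monic irreducible binomials x^t - a of degree t in F_q[x] equals (φ(t)/t)·(q-1) if rad_4(t) divides q-1, and equals 0 otherwise. -/
open Polynomial

/-- The radical of `n`: product of the distinct primes dividing `n`. -/
def rad (n : ℕ) : ℕ := ∏ p ∈ n.primeFactors, p

/-- `rad₄ n = rad n` if `4 ∤ n`, and `2 * rad n` otherwise. -/
def rad4 (n : ℕ) : ℕ := if 4 ∣ n then 2 * rad n else rad n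

/-!
Over any field `K`, `X ^ n - a` is irreducible as soon as `a` is not a `p`-th power for any prime
`p ∣ n`, provided `-1` is a square in `K` when `4 ∣ n`: adjoin a root `x` of `X ^ p - a` and
recurse on `X ^ (n / p) - x` over `K(x)`, transporting the hypothesis down by the norm
`N(x) = ± a`. Over `𝔽_q` with `q ≡ 3 mod 4` and `4 ∣ n` the binomial is always reducible, because
every non-square is of the form `-4 e ^ 4` and `X ^ 4u + 4 e ^ 4` factors (Sophie Germain).

So if `rad₄ t ∣ q - 1`, the irreducible `X ^ t - a` are those with `a` not a `p`-th power for any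
`p ∣ t`. Writing `a = g ^ k` for a generator `g` of `𝔽_qˣ` these are the `k < q - 1` prime to
`rad t`, and there are `(q - 1) / rad t * φ (rad t) = (q - 1) φ(t) / t` of them. If
`rad₄ t ∤ q - 1`, either some prime `p ∣ t` is prime to `q - 1`, and then every `a` is a `p`-th
power, or `4 ∣ t` and `q ≡ 3 mod 4`.
-/

open scoped Nat
open IntermediateField

theorem Nat.Prime.dvd_rad_iff {p t : ℕ} (hp : p.Prime) (ht : t ≠ 0) : p ∣ rad t ↔ p ∣ t := by
  rw [rad, hp.prime.dvd_finsetProd_iff]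
  refine ⟨fun ⟨q, hq, hpq⟩ ↦ ?_, fun h ↦ ⟨p, Nat.mem_primeFactors.mpr ⟨hp, h, ht⟩, dvd_rfl⟩⟩
  rw [(Nat.prime_dvd_prime_iff_eq hp (Nat.prime_of_mem_primeFactors hq)).mp hpq]
  exact Nat.dvd_of_mem_primeFactors hq

theorem rad_dvd_iff {t n : ℕ} : rad t ∣ n ↔ ∀ p ∈ t.primeFactors, p ∣ n :=
  ⟨fun h _ hp ↦ (Finset.dvd_prod_of_mem _ hp).trans h,
    Finset.prod_primes_dvd n fun _ hp ↦ (Nat.prime_of_mem_primeFactors hp).prime⟩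

theorem squarefree_rad (t : ℕ) : Squarefree (rad t) := by
  rw [rad, ← Nat.radical_eq_prod_primeFactors]
  exact UniqueFactorizationMonoid.squarefree_radical

theorem rad4_dvd_iff {t n : ℕ} (ht : t ≠ 0) : rad4 t ∣ n ↔ rad t ∣ n ∧ (4 ∣ t → 4 ∣ n) := by
  unfold rad4
  split_ifs with h4
  · obtain ⟨x, hx⟩ := (Nat.prime_two.dvd_rad_iff ht).mpr (dvd_trans ⟨2, rfl⟩ h4)
    have hodd : ¬ 2 ∣ x := fun h2 ↦
      Nat.prime_two.prime.not_isUnit (squarefree_rad t 2 (hx ▸ mul_dvd_mul_left 2 h2))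
    have hcop : Nat.Coprime 4 x :=
      Nat.Coprime.pow_left 2 (Nat.prime_two.coprime_iff_not_dvd.mpr hodd)
    rw [hx, iff_true_intro h4, true_imp_iff, show 2 * (2 * x) = 4 * x by ring]
    exact ⟨fun h ↦ ⟨dvd_trans ⟨2, by ring⟩ h, dvd_trans (dvd_mul_right 4 x) h⟩,
      fun ⟨h2x, h4n⟩ ↦ hcop.mul_dvd_of_dvd_of_dvd h4n (dvd_trans (dvd_mul_left x 2) h2x)⟩
  · simp [h4]

theorem totient_rad_div_rad {t : ℕ} (ht : t ≠ 0) : (φ (rad t) : ℚ) / rad t = φ t / t := by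
  have hrad : (rad t : ℚ) ≠ 0 := by exact_mod_cast (squarefree_rad t).ne_zero
  rw [Nat.totient_eq_mul_prod_factors, Nat.totient_eq_mul_prod_factors, rad,
    Nat.primeFactors_prod_primeFactors, ← rad, mul_div_cancel_left₀ _ hrad,
    mul_div_cancel_left₀ _ (Nat.cast_ne_zero.mpr ht)]

open Finset in
theorem Nat.card_filter_coprime_range_mul (r m : ℕ) :
    #{k ∈ range (r * m) | r.Coprime k} = m * φ r := by
  induction m with
  | zero => simp
  | succ m IH =>
    rw [mul_add_one, range_eq_Ico, ← Ico_union_Ico_eq_Ico (Nat.zero_le _) le_self_add,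
      filter_union,
      card_union_of_disjoint (disjoint_filter_filter (Ico_disjoint_Ico_consecutive ..)),
      ← range_eq_Ico, IH, Nat.filter_coprime_Ico_eq_totient, add_one_mul]

theorem exists_pow_eq_pow_iff_dvd_of_orderOf_eq_card {G : Type*} [Group G] [Finite G] {g : G}
    (hg : orderOf g = Nat.card G) {p : ℕ} (hp : p ∣ Nat.card G) (k : ℕ) :
    (∃ b : G, b ^ p = g ^ k) ↔ p ∣ k := by
  refine ⟨fun ⟨b, hb⟩ ↦ ?_, fun ⟨c, hc⟩ ↦ ⟨g ^ c, by rw [hc, ← pow_mul, mul_comm]⟩⟩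
  have hpow : g ^ (k * (Nat.card G / p)) = 1 := by
    rw [pow_mul, ← hb, ← pow_mul, Nat.mul_div_cancel' hp, pow_card_eq_one']
  rw [← orderOf_dvd_iff_pow_eq_one, hg] at hpow
  nth_rw 1 [← Nat.div_mul_cancel hp, mul_comm] at hpow
  exact Nat.dvd_of_mul_dvd_mul_right (Nat.div_pos (Nat.le_of_dvd Nat.card_pos hp)
    (Nat.pos_of_dvd_of_pos hp Nat.card_pos)) hpow

theorem exists_pow_eq_of_coprime_card {G : Type*} [Group G] {p : ℕ} (h : (Nat.card G).Coprime p)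
    (a : G) : ∃ b : G, b ^ p = a :=
  ⟨(powCoprime h).symm a, by rw [← powCoprime_apply h, Equiv.apply_symm_apply]⟩

open Finset in
theorem IsCyclic.card_forall_not_pow_eq {G : Type*} [Group G] [Finite G] [IsCyclic G] {r : ℕ}
    (hr : r ∣ Nat.card G) :
    Nat.card {a : G // ∀ p : ℕ, p.Prime → p ∣ r → ∀ b : G, b ^ p ≠ a} = Nat.card G / r * φ r := by
  classical
  have := Fintype.ofFinite G
  obtain ⟨g, hg⟩ := IsCyclic.exists_ofOrder_eq_natCard (α := G)
  have hcoprime (k : ℕ) : (∀ p : ℕ, p.Prime → p ∣ r → ∀ b : G, b ^ p ≠ g ^ k) ↔ r.Coprime k := by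
    rw [← not_iff_not, Nat.Prime.not_coprime_iff_dvd]
    push Not
    refine exists_congr fun p ↦ and_congr_right fun hp ↦ and_congr_right fun hpr ↦ ?_
    exact exists_pow_eq_pow_iff_dvd_of_orderOf_eq_card hg (dvd_trans hpr hr) k
  have hinj : Set.InjOn (g ^ ·) (range (Nat.card G)) := by
    rw [coe_range, ← hg]; exact pow_injOn_Iio_orderOf
  have himage : (range (Nat.card G)).image (g ^ ·) = univ :=
    eq_univ_of_card _ (by rw [card_image_of_injOn hinj, card_range, Nat.card_eq_fintype_card])
  rw [← Nat.card_filter_coprime_range_mul r, Nat.mul_div_cancel' hr, Nat.card_eq_fintype_card,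
    Fintype.card_subtype, ← himage, filter_image,
    card_image_of_injOn (hinj.mono (coe_subset.mpr (filter_subset _ _)))]
  simp only [hcoprime]

theorem Units.forall_pow_ne_iff {M : Type*} [Monoid M] {p : ℕ} (hp : p ≠ 0) (a : Mˣ) :
    (∀ b : M, b ^ p ≠ a) ↔ ∀ b : Mˣ, b ^ p ≠ a :=
  ⟨fun h b hb ↦ h b (by rw [← Units.val_pow_eq_pow_val, hb]),
    fun h b hb ↦ h ((isUnit_pow_iff hp).mp (hb ▸ a.isUnit)).unit (Units.ext (by simp [hb]))⟩

theorem norm_adjoinSimple_gen_of_minpoly_eq_X_pow_sub_C {K E : Type*} [Field K] [Field E]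
    [Algebra K E] {x : E} {n : ℕ} {a : K} (hn : n ≠ 0) (hx : minpoly K x = X ^ n - C a) :
    Algebra.norm K (AdjoinSimple.gen K x) = -(-1) ^ n * a := by
  have hint : IsIntegral K x := minpoly.ne_zero_iff.mp (hx ▸ X_pow_sub_C_ne_zero hn.bot_lt a)
  rw [← adjoin.powerBasis_gen hint, Algebra.PowerBasis.norm_gen_eq_coeff_zero_minpoly]
  simp [minpoly_gen, hx, hn.symm]

theorem exists_pow_eq_neg_pow {R : Type*} [CommRing R] {p : ℕ} (hp : p.Prime)
    (h : p = 2 → IsSquare (-1 : R)) (c : R) : ∃ d : R, d ^ p = -c ^ p := by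
  rcases hp.eq_two_or_odd' with rfl | hodd
  · obtain ⟨i, hi⟩ := h rfl
    exact ⟨i * c, by rw [mul_pow, sq i, ← hi, neg_one_mul]⟩
  · exact ⟨-c, hodd.neg_pow c⟩

theorem X_pow_sub_C_irreducible_of_forall_prime {K : Type*} [Field K] {n : ℕ} (hn : n ≠ 0)
    {a : K} (h4 : 4 ∣ n → IsSquare (-1 : K))
    (ha : ∀ p : ℕ, p.Prime → p ∣ n → ∀ b : K, b ^ p ≠ a) : Irreducible (X ^ n - C a) := by
  induction n using induction_on_primes generalizing K a with
  | zero => contradiction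
  | one => simpa using irreducible_X_sub_C a
  | prime_mul p n hp IH =>
    rw [mul_comm]
    refine X_pow_mul_sub_C_irreducible
      (X_pow_sub_C_irreducible_of_prime hp (ha p hp (dvd_mul_right _ _))) fun E _ _ x hx ↦ ?_
    refine IH (right_ne_zero_of_mul hn) (fun h ↦ ?_) fun q hq hqn b hb ↦ ?_
    · simpa using (h4 (h.mul_left p)).map (algebraMap K K⟮x⟯)
    · -- taking norms, `b ^ q = x` gives `N(b) ^ q = ± a`, with the sign `-` only for `p = 2`
      have hnorm := congrArg (Algebra.norm K) hb
      rw [map_pow, norm_adjoinSimple_gen_of_minpoly_eq_X_pow_sub_C hp.ne_zero hx] at hnorm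
      rcases hp.eq_two_or_odd' with rfl | hodd
      · obtain ⟨d, hd⟩ := exists_pow_eq_neg_pow hq
          (fun hq2 ↦ h4 (by subst hq2; omega)) (Algebra.norm K b)
        exact ha q hq (dvd_mul_of_dvd_right hqn 2) d (by rw [hd, hnorm]; ring)
      · exact ha q hq (dvd_mul_of_dvd_right hqn p) _ (by rw [hnorm, hodd.neg_one_pow]; ring)

theorem not_irreducible_X_pow_sub_C_neg_four_mul_pow_four {K : Type*} [Field K] (u : ℕ) (e : K) :
    ¬ Irreducible (X ^ (4 * u) - C (-4 * e ^ 4)) := by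
  rcases u.eq_zero_or_pos with rfl | hu
  · rw [mul_zero, pow_zero, ← C_1, ← C_sub]
    exact not_irreducible_C _
  set P : K[X] := X ^ (2 * u) - C (2 * e) * X ^ u + C (2 * e ^ 2)
  set Q : K[X] := X ^ (2 * u) + C (2 * e) * X ^ u + C (2 * e ^ 2)
  -- Sophie Germain: `Y ^ 4 + 4 e ^ 4 = (Y ^ 2 - 2 e Y + 2 e ^ 2) (Y ^ 2 + 2 e Y + 2 e ^ 2)`
  have hPQ : X ^ (4 * u) - C (-4 * e ^ 4) = P * Q := by
    simp only [P, Q, map_mul, map_neg, map_ofNat, map_pow]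
    ring
  have hP : P.natDegree = 2 * u := by
    simp only [P]; compute_degree
    all_goals first | omega | simp [hu.ne', show 2 * u ≠ u by omega]
  have hQ : Q.natDegree = 2 * u := by
    simp only [Q]; compute_degree
    all_goals first | omega | simp [hu.ne', show 2 * u ≠ u by omega]
  intro h
  rcases h.isUnit_or_isUnit hPQ with hunit | hunit
  · simpa [hP, hu.ne'] using natDegree_eq_zero_of_isUnit hunit
  · simpa [hQ, hu.ne'] using natDegree_eq_zero_of_isUnit hunit

namespace FiniteField

variable {F : Type*} [Field F] [Fintype F]

theorem isSquare_neg_of_not_isSquare (h : ¬ IsSquare (-1 : F)) {x : F} (hx : ¬ IsSquare x) :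
    IsSquare (-x) := by
  classical
  have hx0 : x ≠ 0 := by rintro rfl; exact hx IsSquare.zero
  rw [← quadraticChar_one_iff_isSquare (neg_ne_zero.mpr hx0), neg_eq_neg_one_mul, map_mul,
    quadraticChar_neg_one_iff_not_isSquare.mpr h, quadraticChar_neg_one_iff_not_isSquare.mpr hx]
  norm_num

theorem exists_eq_neg_four_mul_pow_four (h : ¬ IsSquare (-1 : F)) {a : F} (ha : ¬ IsSquare a) :
    ∃ e : F, a = -4 * e ^ 4 := by
  have h2 : (2 : F) ≠ 0 := fun h2 ↦ h ⟨1, by linear_combination -h2⟩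
  obtain ⟨s, hs⟩ := isSquare_neg_of_not_isSquare h ha
  obtain ⟨c, rfl⟩ : ∃ c, s = 2 * c := ⟨s / 2, (mul_div_cancel₀ s h2).symm⟩
  obtain ⟨e, he⟩ | ⟨e, he⟩ : IsSquare c ∨ IsSquare (-c) := by
    by_cases hc : IsSquare c
    exacts [Or.inl hc, Or.inr (isSquare_neg_of_not_isSquare h hc)]
  · exact ⟨e, by linear_combination -hs - 4 * (c + e * e) * he⟩
  · exact ⟨e, by linear_combination -hs + 4 * (c - e * e) * he⟩

theorem not_irreducible_X_pow_sub_C_of_four_dvd (h : ¬ IsSquare (-1 : F)) {n : ℕ} (hn : 4 ∣ n)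
    (a : F) : ¬ Irreducible (X ^ n - C a) := by
  intro H
  by_cases ha : IsSquare a
  · obtain ⟨b, rfl⟩ := ha
    exact pow_ne_of_irreducible_X_pow_sub_C H (dvd_trans ⟨2, rfl⟩ hn) (by norm_num) b (sq b)
  · obtain ⟨e, rfl⟩ := exists_eq_neg_four_mul_pow_four h ha
    obtain ⟨u, rfl⟩ := hn
    exact not_irreducible_X_pow_sub_C_neg_four_mul_pow_four u e H

theorem X_pow_sub_C_irreducible_iff {n : ℕ} (hn : n ≠ 0) {a : F} :
    Irreducible (X ^ n - C a) ↔
      (4 ∣ n → IsSquare (-1 : F)) ∧ ∀ p : ℕ, p.Prime → p ∣ n → ∀ b : F, b ^ p ≠ a :=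
  ⟨fun H ↦ ⟨fun h4 ↦ not_not.mp fun h ↦ not_irreducible_X_pow_sub_C_of_four_dvd h h4 a H,
      fun _ hp hpn ↦ pow_ne_of_irreducible_X_pow_sub_C H hpn hp.ne_one⟩,
    fun ⟨h4, ha⟩ ↦ X_pow_sub_C_irreducible_of_forall_prime hn h4 ha⟩

theorem X_pow_sub_C_units_irreducible_iff {t : ℕ} (ht : t ≠ 0) (a : Fˣ) :
    Irreducible (X ^ t - C (a : F)) ↔
      (4 ∣ t → IsSquare (-1 : F)) ∧ ∀ p : ℕ, p.Prime → p ∣ rad t → ∀ b : Fˣ, b ^ p ≠ a := by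
  rw [X_pow_sub_C_irreducible_iff ht]
  refine and_congr_right fun _ ↦ forall_congr' fun p ↦ forall_congr' fun hp ↦ ?_
  rw [hp.dvd_rad_iff ht, Units.forall_pow_ne_iff hp.ne_zero]

theorem rad4_dvd_card_sub_one_of_irreducible {t : ℕ} (ht : t ≠ 0) {a : Fˣ}
    (ha : Irreducible (X ^ t - C (a : F))) : rad4 t ∣ Fintype.card F - 1 := by
  have hunits : Nat.card Fˣ = Fintype.card F - 1 := by
    rw [Nat.card_units, Nat.card_eq_fintype_card]
  obtain ⟨h4, hpow⟩ := (X_pow_sub_C_units_irreducible_iff ht a).mp ha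
  have hrad : rad t ∣ Fintype.card F - 1 := rad_dvd_iff.mpr fun p hp ↦ by
    have hp' := Nat.prime_of_mem_primeFactors hp
    by_contra hpq
    obtain ⟨b, hb⟩ := exists_pow_eq_of_coprime_card
      (hunits ▸ (hp'.coprime_iff_not_dvd.mpr hpq).symm) a
    exact hpow p hp' ((hp'.dvd_rad_iff ht).mpr (Nat.dvd_of_mem_primeFactors hp)) b hb
  refine (rad4_dvd_iff ht).mpr ⟨hrad, fun h4t ↦ ?_⟩
  have h2 : 2 ∣ Fintype.card F - 1 :=
    ((Nat.prime_two.dvd_rad_iff ht).mpr (dvd_trans ⟨2, rfl⟩ h4t)).trans hrad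
  have h3 := isSquare_neg_one_iff.mp (h4 h4t)
  omega

theorem card_irreducible_X_pow_sub_C {t : ℕ} (ht : t ≠ 0) (h : rad4 t ∣ Fintype.card F - 1) :
    Nat.card {a : Fˣ // Irreducible (X ^ t - C (a : F))} =
      (Fintype.card F - 1) / rad t * φ (rad t) := by
  obtain ⟨hrad, h4⟩ := (rad4_dvd_iff ht).mp h
  have hsq (h4t : 4 ∣ t) : IsSquare (-1 : F) := by
    have := h4 h4t
    rw [isSquare_neg_one_iff]
    omega
  have hunits : Nat.card Fˣ = Fintype.card F - 1 := by
    rw [Nat.card_units, Nat.card_eq_fintype_card]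
  rw [Nat.card_congr (Equiv.subtypeEquivRight fun a ↦
      (X_pow_sub_C_units_irreducible_iff ht a).trans (and_iff_right hsq)),
    IsCyclic.card_forall_not_pow_eq (hunits ▸ hrad), hunits]

end FiniteField

theorem stmt_1_general (q : ℕ) (F : Type*) [Field F] [Fintype F]
    (hcard : Fintype.card F = q) (t : ℕ) (ht : 1 ≤ t) :
    ((Nat.card {a : Fˣ // Irreducible (X ^ t - C (a : F))}) : ℚ) =
      if rad4 t ∣ q - 1 then (Nat.totient t : ℚ) / t * (q - 1) else 0 := by
  subst hcard
  have ht0 : t ≠ 0 := Nat.one_le_iff_ne_zero.mp ht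
  split_ifs with h
  · have hrad : rad t ∣ Fintype.card F - 1 := ((rad4_dvd_iff ht0).mp h).1
    rw [FiniteField.card_irreducible_X_pow_sub_C ht0 h, Nat.cast_mul,
      Nat.cast_div hrad (Nat.cast_ne_zero.mpr (squarefree_rad t).ne_zero),
      ← totient_rad_div_rad ht0, Nat.cast_sub Fintype.card_pos]
    ring
  · exact Nat.cast_eq_zero.mpr (Nat.card_eq_zero.mpr (Or.inl
      ⟨fun ⟨_, ha⟩ ↦ h (FiniteField.rad4_dvd_card_sub_one_of_irreducible ht0 ha)⟩))

theorem stmt_1 (q : ℕ) (hq : IsPrimePow q) (F : Type*) [Field F] [Fintype F]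
    (hcard : Fintype.card F = q) (t : ℕ) (ht : 1 ≤ t) :
    ((Nat.card {a : Fˣ // Irreducible (X ^ t - C (a : F))}) : ℚ) =
      if rad4 t ∣ q - 1 then (Nat.totient t : ℚ) / t * (q - 1) else 0 :=
  stmt_1_general q F hcard t ht
end

section
/- Let a_1, ..., a_s and λ be positive real numbers, and let N_s(λ; a_1,...,a_s) denote the number of points (x_1,...,x_s) with nonnegative integer coordinates satisfying a_1 x_1 + ... + a_s x_s ≤ λ. Then N_s(λ; a_1,...,a_s) > λ^s / (s! · a_1 ⋯ a_s). -/
/-- Number of nonnegative-integer lattice points in the simplex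
`a₁x₁ + ⋯ + aₛxₛ ≤ λ`. -/
noncomputable def latticeCount (s : ℕ) (a : Fin s → ℝ) (lam : ℝ) : ℕ :=
  Nat.card {v : Fin s → ℕ // ∑ i, a i * v i ≤ lam}

/-!
Slicing the simplex by the value `k = x₁ ∈ {0, …, ⌊λ / a₁⌋}` of the first coordinate gives
`N_{s+1}(λ) = ∑ₖ N_s(λ - a₁ k)`. By induction each slice has more than
`(λ - a₁ k)^s / (s! a₂ ⋯ a_{s+1})` points, and `∑ₖ (λ - a₁ k)^s` is an upper Riemann sum, with
mesh `a₁`, of `∫₀^λ t^s dt = λ^{s+1} / (s + 1)`. The induction starts at `s = 1`, where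
`N₁(λ) = ⌊λ / a₁⌋ + 1 > λ / a₁`.
-/

open Finset

lemma pow_succ_sub_pow_succ_le {R : Type*} [CommRing R] [LinearOrder R] [IsOrderedRing R]
    {x y : R} (hy : 0 ≤ y) (hyx : y ≤ x) (n : ℕ) :
    x ^ (n + 1) - y ^ (n + 1) ≤ (n + 1) * x ^ n * (x - y) := by
  have hx := hy.trans hyx
  have := abs_pow_sub_pow_le (a := x) (b := y) (n := n + 1)
  rw [abs_of_nonneg hx, abs_of_nonneg hy, max_eq_left hyx, abs_of_nonneg (sub_nonneg.2 hyx),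
    Nat.add_sub_cancel, Nat.cast_succ] at this
  calc x ^ (n + 1) - y ^ (n + 1) ≤ |x ^ (n + 1) - y ^ (n + 1)| := le_abs_self _
    _ ≤ (x - y) * (n + 1) * x ^ n := this
    _ = (n + 1) * x ^ n * (x - y) := by ring

lemma mul_le_of_mem_range_floor_div {c lam : ℝ} (hc : 0 < c) (hlam : 0 ≤ lam) {k : ℕ}
    (hk : k ∈ range (⌊lam / c⌋₊ + 1)) : c * k ≤ lam := by
  rwa [mem_range, Nat.lt_succ_iff, Nat.le_floor_iff (by positivity), le_div_iff₀ hc, mul_comm] at hk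

/-- A Riemann sum for `∫₀^λ tⁿ dt = λⁿ⁺¹ / (n + 1)` with mesh `c`, sampled at the right end of
each cell `[λ - c (k + 1), λ - c k]`. -/
lemma pow_succ_le_mul_sum_pow (n : ℕ) {c lam : ℝ} (hc : 0 < c) (hlam : 0 ≤ lam) :
    lam ^ (n + 1) ≤ (n + 1) * c * ∑ k ∈ range (⌊lam / c⌋₊ + 1), (lam - c * k) ^ n := by
  set m := ⌊lam / c⌋₊
  set y : ℕ → ℝ := fun k ↦ max (lam - c * k) 0
  have telescope : ∑ k ∈ range (m + 1), (y k ^ (n + 1) - y (k + 1) ^ (n + 1)) = lam ^ (n + 1) := by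
    have hm : lam ≤ c * (m + 1) := by
      have := Nat.lt_floor_add_one (lam / c)
      rw [div_lt_iff₀ hc] at this
      linarith
    rw [sum_range_sub']
    simp [y, hlam, hm]
  rw [← telescope, mul_sum]
  refine sum_le_sum fun k hk ↦ ?_
  have hyk : y k = lam - c * k :=
    max_eq_left <| sub_nonneg.2 <| mul_le_of_mem_range_floor_div hc hlam hk
  have hstep : y k - c ≤ y (k + 1) := by
    rw [hyk]
    exact le_max_of_le_left (by push_cast; linarith)
  calc y k ^ (n + 1) - y (k + 1) ^ (n + 1) ≤ (n + 1) * y k ^ n * (y k - y (k + 1)) :=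
        pow_succ_sub_pow_succ_le (le_max_right _ _)
          (max_le_max (by push_cast; linarith) le_rfl) n
    _ ≤ (n + 1) * y k ^ n * c := by
        have : 0 ≤ y k := le_max_right _ _
        gcongr
        linarith
    _ = (n + 1) * c * (lam - c * k) ^ n := by rw [hyk]; ring

abbrev LatticePoints (s : ℕ) (a : Fin s → ℝ) (lam : ℝ) : Type :=
  {v : Fin s → ℕ // ∑ i, a i * v i ≤ lam}

section LatticePoints

variable {s : ℕ} {a : Fin s → ℝ} {lam : ℝ}

lemma LatticePoints.coord_le_div (ha : ∀ i, 0 < a i) (v : LatticePoints s a lam) (i : Fin s) :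
    (v.1 i : ℝ) ≤ lam / a i := by
  rw [le_div_iff₀ (ha i), mul_comm]
  exact (single_le_sum (fun j _ ↦ by have := ha j; positivity) (mem_univ i)).trans v.2

theorem LatticePoints.finite (ha : ∀ i, 0 < a i) : Finite (LatticePoints s a lam) :=
  Finite.of_injective
    (fun v i ↦ (⟨v.1 i, Nat.lt_succ_of_le (Nat.le_floor (v.coord_le_div ha i))⟩ :
      Fin (⌊lam / a i⌋₊ + 1)))
    fun _ _ h ↦ Subtype.ext <| funext fun i ↦ congrArg Fin.val (congrFun h i)

end LatticePoints

lemma latticeCount_zero (a : Fin 0 → ℝ) {lam : ℝ} (hlam : 0 ≤ lam) : latticeCount 0 a lam = 1 :=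
  have : Nonempty (LatticePoints 0 a lam) := ⟨⟨0, by simpa using hlam⟩⟩
  Nat.card_unique

noncomputable def LatticePoints.equivSigma {n : ℕ} (a : Fin (n + 1) → ℝ) (ha : ∀ i, 0 < a i)
    (lam : ℝ) :
    LatticePoints (n + 1) a lam ≃
      Σ k : Fin (⌊lam / a 0⌋₊ + 1), LatticePoints n (fun i ↦ a i.succ) (lam - a 0 * k) where
  toFun v := ⟨⟨v.1 0, Nat.lt_succ_of_le (Nat.le_floor (v.coord_le_div ha 0))⟩,
    ⟨fun i ↦ v.1 i.succ, by have := v.2; rw [Fin.sum_univ_succ] at this; simp; linarith⟩⟩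
  invFun p := ⟨Fin.cons p.1.1 p.2.1, by
    have := p.2.2; rw [Fin.sum_univ_succ]; simp; linarith⟩
  left_inv v := by ext i; cases i using Fin.cases <;> simp
  right_inv := by rintro ⟨k, w⟩; rfl

lemma latticeCount_succ {n : ℕ} (a : Fin (n + 1) → ℝ) (ha : ∀ i, 0 < a i) (lam : ℝ) :
    latticeCount (n + 1) a lam =
      ∑ k ∈ range (⌊lam / a 0⌋₊ + 1), latticeCount n (fun i ↦ a i.succ) (lam - a 0 * k) := by
  have := fun k : ℝ ↦ LatticePoints.finite (lam := k) fun i ↦ ha i.succ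
  exact (Nat.card_congr (LatticePoints.equivSigma a ha lam)).trans <| Nat.card_sigma.trans <|
    Fin.sum_univ_eq_sum_range (fun k ↦ latticeCount n (fun i ↦ a i.succ) (lam - a 0 * k)) _

lemma latticeCount_one (a : Fin 1 → ℝ) (ha : ∀ i, 0 < a i) {lam : ℝ} (hlam : 0 ≤ lam) :
    latticeCount 1 a lam = ⌊lam / a 0⌋₊ + 1 := by
  rw [latticeCount_succ a ha, sum_congr rfl fun k hk ↦ latticeCount_zero _ <|
    sub_nonneg.2 <| mul_le_of_mem_range_floor_div (ha 0) hlam hk]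
  simp

theorem div_lt_latticeCount {s : ℕ} (hs : 1 ≤ s) {a : Fin s → ℝ} (ha : ∀ i, 0 < a i) {lam : ℝ}
    (hlam : 0 ≤ lam) : lam ^ s / (s.factorial * ∏ i, a i) < latticeCount s a lam := by
  induction s, hs using Nat.le_induction generalizing lam with
  | base =>
    rw [latticeCount_one a ha hlam]
    simpa using Nat.lt_floor_add_one (lam / a 0)
  | succ n _ ih =>
    have hb : ∀ i : Fin n, 0 < a i.succ := fun i ↦ ha i.succ
    calc lam ^ (n + 1) / ((n + 1).factorial * ∏ i, a i)
        = lam ^ (n + 1) / ((n + 1) * a 0) / (n.factorial * ∏ i : Fin n, a i.succ) := by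
          rw [Fin.prod_univ_succ, Nat.factorial_succ, div_div]
          push_cast
          ring
      _ ≤ (∑ k ∈ range (⌊lam / a 0⌋₊ + 1), (lam - a 0 * k) ^ n) /
            (n.factorial * ∏ i : Fin n, a i.succ) := by
          have := ha 0
          have : 0 < ∏ i : Fin n, a i.succ := prod_pos fun i _ ↦ hb i
          gcongr
          rw [div_le_iff₀ (by positivity)]
          linarith [pow_succ_le_mul_sum_pow n (ha 0) hlam]
      _ = ∑ k ∈ range (⌊lam / a 0⌋₊ + 1),
            (lam - a 0 * k) ^ n / (n.factorial * ∏ i : Fin n, a i.succ) := sum_div ..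
      _ < ∑ k ∈ range (⌊lam / a 0⌋₊ + 1),
            (latticeCount n (fun i ↦ a i.succ) (lam - a 0 * k) : ℝ) :=
          sum_lt_sum_of_nonempty nonempty_range_add_one fun k hk ↦
            ih hb (sub_nonneg.2 (mul_le_of_mem_range_floor_div (ha 0) hlam hk))
      _ = latticeCount (n + 1) a lam := by
          rw [latticeCount_succ a ha]
          push_cast
          rfl

theorem stmt_2 (s : ℕ) (hs : 1 ≤ s) (a : Fin s → ℝ) (ha : ∀ i, 0 < a i)
    (lam : ℝ) (hlam : 0 < lam) :
    (latticeCount s a lam : ℝ) > lam ^ s / ((s.factorial : ℝ) * ∏ i, a i) :=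
  div_lt_latticeCount hs ha hlam.le
end

section
/- Let q be a prime power with q ≢ 3 (mod 4), s ≥ 2, and q - 1 = p_1^{α_1}⋯p_s^{α_s}. For any T > 1, Σ_{t≤T} N_q(t) > (φ(q-1)/(s!·log p_1 ⋯ log p_s)) · (log T)^s · (1 + s·log(rad(q-1)/p_1)/(2 log T)). -/
open Polynomial Filter Asymptotics

/-- `Nbin F t` is the number of monic irreducible binomials `x^t - a` in `F[x]`. -/
noncomputable def Nbin (F : Type*) [Field F] [Fintype F] (t : ℕ) : ℕ :=
  Nat.card {a : Fˣ // Irreducible (X ^ t - C (a : F))}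

/-!
Each exponent vector `x ∈ ℕˢ` with `∑ xⱼ log pⱼ ≤ log T` gives its own integer
`t = ∏ pⱼ ^ xⱼ ≤ T` with `rad t ∣ q - 1`. For such `t` and every generator `a` of `F_qˣ` the
binomial `X ^ t - a` is irreducible by Capelli's criterion: `a` is no `ℓ`-th power for a prime
`ℓ ∣ q - 1`, and `q ≢ 3 (mod 4)` makes `-1` a square, which settles the case `4 ∣ t`. So every
such `t` contributes at least `φ (q - 1)` binomials, and the exponent vectors are counted from below
by Lehmer's bound. That bound is proved by induction on the dimension: splitting off the vectors
with last coordinate `0` gives `#(A) = #'(A) + #(A - aₗₐₛₜ)`, and the bound obeys this recurrence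
as an inequality because of the trapezoid rule for `x ↦ x ^ k`.
-/

open Finset IntermediateField
open scoped Nat

universe u

theorem norm_gen_of_minpoly_eq_X_pow_sub_C {K E : Type*} [Field K] [Field E] [Algebra K E]
    {x : E} {n : ℕ} (hn : n ≠ 0) {a : K} (hx : minpoly K x = X ^ n - C a) :
    Algebra.norm K (AdjoinSimple.gen K x) = (-1) ^ n * -a := by
  have hint : IsIntegral K x :=
    minpoly.ne_zero_iff.mp (hx ▸ X_pow_sub_C_ne_zero (Nat.pos_of_ne_zero hn) a)
  rw [← adjoin.powerBasis_gen hint, Algebra.PowerBasis.norm_gen_eq_coeff_zero_minpoly]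
  simp [minpoly_gen, hx, hn.symm]

theorem exists_pow_eq_of_pow_eq_neg_one_pow_mul_neg {K : Type*} [Field K] {p r : ℕ}
    (hp : p.Prime) (hr : r.Prime) {a c : K} (hc : c ^ r = (-1) ^ p * -a)
    (hsq : p = 2 → r = 2 → IsSquare (-1 : K)) : ∃ b : K, b ^ r = a := by
  rcases hp.eq_two_or_odd' with rfl | hp_odd
  · rcases hr.eq_two_or_odd' with rfl | hr_odd
    · obtain ⟨i, hi⟩ := hsq rfl rfl
      exact ⟨i * c, by rw [mul_pow, hc, sq, ← hi]; ring⟩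
    · exact ⟨-c, by rw [hr_odd.neg_pow, hc]; ring⟩
  · exact ⟨c, by rw [hc, hp_odd.neg_one_pow]; ring⟩

/-- A case of Capelli's theorem: if `-1 = i ^ 2` then `-4 = (1 + i) ^ 4`, so the exceptional case
`a ∈ -4 K⁴` is excluded once `a` is not a square. -/
theorem X_pow_sub_C_irreducible_of_isSquare_neg_one {K : Type u} [Field K] {t : ℕ} (ht : t ≠ 0)
    {a : K} (ha : ∀ ℓ : ℕ, ℓ.Prime → ℓ ∣ t → ∀ b : K, b ^ ℓ ≠ a)
    (hsq : 4 ∣ t → IsSquare (-1 : K)) :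
    Irreducible (X ^ t - C a) := by
  induction t using induction_on_primes generalizing K a with
  | zero => exact absurd rfl ht
  | one => simpa using irreducible_X_sub_C a
  | prime_mul p n hp IH =>
    rw [mul_comm]
    apply X_pow_mul_sub_C_irreducible
      (X_pow_sub_C_irreducible_of_prime hp (ha p hp (dvd_mul_right _ _)))
    intro E _ _ x hx
    refine IH (right_ne_zero_of_mul ht) (fun r hr hrn b hb ↦ ?_) fun h4 ↦ ?_
    -- an `r`-th root of `x` in `K⟮x⟯` would give, through the norm, an `r`-th root of `±a` in `K`
    · have hnorm : Algebra.norm K b ^ r = (-1) ^ p * -a := by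
        rw [← map_pow, hb, norm_gen_of_minpoly_eq_X_pow_sub_C hp.ne_zero hx]
      obtain ⟨c, hc⟩ := exists_pow_eq_of_pow_eq_neg_one_pow_mul_neg hp hr hnorm
        fun hp2 hr2 ↦ hsq (by subst hp2 hr2; exact mul_dvd_mul_left 2 hrn)
      exact ha r hr (dvd_mul_of_dvd_right hrn p) c hc
    · obtain ⟨i, hi⟩ := hsq (dvd_mul_of_dvd_right h4 p)
      exact ⟨algebraMap K _ i, by rw [← map_mul, ← hi, map_neg, map_one]⟩

theorem FiniteField.pow_ne_of_orderOf_eq {F : Type*} [Field F] [Fintype F] {a : Fˣ}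
    (ha : orderOf a = Fintype.card F - 1) {ℓ : ℕ} (hℓ : ℓ.Prime)
    (hdvd : ℓ ∣ Fintype.card F - 1) (b : F) : b ^ ℓ ≠ a := by
  intro hb
  have hb0 : b ≠ 0 := by rintro rfl; exact a.ne_zero (by rw [← hb, zero_pow hℓ.ne_zero])
  have hpow : a ^ ((Fintype.card F - 1) / ℓ) = 1 := Units.ext <| by
    rw [Units.val_pow_eq_pow_val, ← hb, ← pow_mul, Nat.mul_div_cancel' hdvd,
      FiniteField.pow_card_sub_one_eq_one b hb0, Units.val_one]
  have hq : 0 < Fintype.card F - 1 := by have := Fintype.one_lt_card (α := F); omega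
  have hle := Nat.le_of_dvd (Nat.div_pos (Nat.le_of_dvd hq hdvd) hℓ.pos)
    (ha ▸ orderOf_dvd_of_pow_eq_one hpow)
  exact (Nat.div_lt_self hq hℓ.one_lt).not_ge hle

theorem totient_le_nbin (F : Type*) [Field F] [Fintype F] {t : ℕ} (ht : t ≠ 0)
    (hrad : ∀ ℓ : ℕ, ℓ.Prime → ℓ ∣ t → ℓ ∣ Fintype.card F - 1)
    (h4 : 4 ∣ t → Fintype.card F % 4 ≠ 3) :
    Nat.totient (Fintype.card F - 1) ≤ Nbin F t := by
  classical
  have hirr (a : Fˣ) (ha : orderOf a = Fintype.card F - 1) : Irreducible (X ^ t - C (a : F)) :=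
    X_pow_sub_C_irreducible_of_isSquare_neg_one ht
      (fun ℓ hℓ hℓt ↦ FiniteField.pow_ne_of_orderOf_eq ha hℓ (hrad ℓ hℓ hℓt))
      fun h ↦ FiniteField.isSquare_neg_one_iff.mpr (h4 h)
  calc Nat.totient (Fintype.card F - 1)
      = Finset.card {a : Fˣ | orderOf a = Fintype.card F - 1} :=
        (IsCyclic.card_orderOf_eq_totient (by rw [Fintype.card_units])).symm
    _ = Nat.card {a : Fˣ // orderOf a = Fintype.card F - 1} := by
        rw [Nat.card_eq_fintype_card, Fintype.card_subtype]
    _ ≤ Nbin F t := Nat.card_le_card_of_injective _ (Subtype.impEmbedding _ _ hirr).injective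

noncomputable def simplexLatticePoints {n : ℕ} (a : Fin n → ℝ) (A : ℝ) : Finset (Fin n → ℕ) :=
  (Fintype.piFinset fun j ↦ range (⌊A / a j⌋₊ + 1)).filter fun x ↦ ∑ j, (x j : ℝ) * a j ≤ A

section Lattice

variable {n : ℕ}

theorem mem_simplexLatticePoints {a : Fin n → ℝ} (ha : ∀ j, 0 < a j) {A : ℝ} {x : Fin n → ℕ} :
    x ∈ simplexLatticePoints a A ↔ ∑ j, (x j : ℝ) * a j ≤ A := by
  simp only [simplexLatticePoints, mem_filter, Fintype.mem_piFinset, mem_range,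
    and_iff_right_iff_imp]
  intro h j
  have hj : (x j : ℝ) * a j ≤ A :=
    (single_le_sum (fun i _ ↦ mul_nonneg (Nat.cast_nonneg _) (ha i).le) (mem_univ j)).trans h
  exact Nat.lt_succ_of_le (Nat.le_floor ((le_div_iff₀ (ha j)).mpr hj))

theorem card_simplexLatticePoints_zero (a : Fin 0 → ℝ) {A : ℝ} (hA : 0 ≤ A) :
    #(simplexLatticePoints a A) = 1 :=
  card_eq_one.mpr ⟨default, eq_singleton_iff_unique_mem.mpr
    ⟨(mem_simplexLatticePoints finZeroElim).mpr (by simpa using hA),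
      fun _ _ ↦ Subsingleton.elim _ _⟩⟩

theorem sum_natCast_mul_eq_init_add_last (x : Fin (n + 1) → ℕ) (a : Fin (n + 1) → ℝ) :
    ∑ j, (x j : ℝ) * a j =
      ∑ j, (Fin.init x j : ℝ) * Fin.init a j + x (Fin.last n) * a (Fin.last n) :=
  Fin.sum_univ_castSucc _

theorem card_simplexLatticePoints_succ {a : Fin (n + 1) → ℝ} (ha : ∀ j, 0 < a j) (A : ℝ) :
    #(simplexLatticePoints a A) =
      #(simplexLatticePoints (Fin.init a) A) + #(simplexLatticePoints a (A - a (Fin.last n))) := by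
  have hinit : ∀ j, 0 < Fin.init a j := fun j ↦ ha _
  rw [← card_filter_add_card_filter_not (fun x ↦ x (Fin.last n) = 0)]
  congr 1
  · refine card_nbij' Fin.init (Fin.snoc · 0) (fun x hx ↦ ?_) (fun y hy ↦ ?_)
      (fun x hx ↦ ?_) (fun y _ ↦ Fin.init_snoc _ _)
    · simp only [coe_filter, Set.mem_ofPred_eq, mem_simplexLatticePoints ha] at hx
      rw [mem_coe, mem_simplexLatticePoints hinit]
      simpa [sum_natCast_mul_eq_init_add_last x, hx.2] using hx.1
    · rw [mem_coe, mem_simplexLatticePoints hinit] at hy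
      simp only [coe_filter, Set.mem_ofPred_eq, mem_simplexLatticePoints ha, Fin.snoc_last]
      simp [sum_natCast_mul_eq_init_add_last, Fin.init_snoc, hy]
    · simp only [coe_filter, Set.mem_ofPred_eq] at hx
      rw [← hx.2]
      exact Fin.snoc_init_self x
  · refine card_nbij' (fun x ↦ Fin.snoc (Fin.init x) (x (Fin.last n) - 1))
      (fun y ↦ Fin.snoc (Fin.init y) (y (Fin.last n) + 1)) (fun x hx ↦ ?_) (fun y hy ↦ ?_)
      (fun x hx ↦ ?_) (fun y _ ↦ ?_)
    · simp only [coe_filter, Set.mem_ofPred_eq, mem_simplexLatticePoints ha] at hx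
      rw [mem_coe, mem_simplexLatticePoints ha]
      rw [sum_natCast_mul_eq_init_add_last] at hx ⊢
      simp only [Fin.init_snoc, Fin.snoc_last]
      rw [Nat.cast_sub (Nat.one_le_iff_ne_zero.mpr hx.2), Nat.cast_one]
      linarith [hx.1]
    · rw [mem_coe, mem_simplexLatticePoints ha, sum_natCast_mul_eq_init_add_last] at hy
      simp only [coe_filter, Set.mem_ofPred_eq, mem_simplexLatticePoints ha, Fin.snoc_last,
        sum_natCast_mul_eq_init_add_last, Fin.init_snoc]
      push_cast
      exact ⟨by linarith, not_false⟩
    · simp only [coe_filter, Set.mem_ofPred_eq] at hx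
      simp only [Fin.init_snoc, Fin.snoc_last, Nat.sub_add_cancel (Nat.one_le_iff_ne_zero.mpr hx.2)]
      exact Fin.snoc_init_self x
    · simp [Fin.init_snoc, Fin.snoc_last, Fin.snoc_init_self]

end Lattice

/-- The trapezoid rule for the convex function `x ↦ x ^ k` on `[u, v]`. -/
theorem two_mul_pow_sub_pow_le {u v : ℝ} (hu : 0 ≤ u) (huv : u ≤ v) (k : ℕ) :
    2 * (v ^ (k + 1) - u ^ (k + 1)) ≤ (k + 1) * (v - u) * (v ^ k + u ^ k) := by
  have hpair (i : ℕ) (hik : i ≤ k) : v ^ i * u ^ (k - i) + v ^ (k - i) * u ^ i ≤ v ^ k + u ^ k := by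
    have hprod : 0 ≤ (v ^ i - u ^ i) * (v ^ (k - i) - u ^ (k - i)) :=
      mul_nonneg (sub_nonneg.mpr (pow_le_pow_left₀ hu huv i))
        (sub_nonneg.mpr (pow_le_pow_left₀ hu huv (k - i)))
    have hv : v ^ i * v ^ (k - i) = v ^ k := by rw [← pow_add, Nat.add_sub_cancel' hik]
    have hu' : u ^ i * u ^ (k - i) = u ^ k := by rw [← pow_add, Nat.add_sub_cancel' hik]
    nlinarith
  have hgeom : (∑ i ∈ range (k + 1), v ^ i * u ^ (k - i)) * (v - u) = v ^ (k + 1) - u ^ (k + 1) :=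
    (Commute.all v u).geom_sum₂_mul (k + 1)
  have hsum : 2 * ∑ i ∈ range (k + 1), v ^ i * u ^ (k - i) ≤ (k + 1) * (v ^ k + u ^ k) := by
    calc 2 * ∑ i ∈ range (k + 1), v ^ i * u ^ (k - i)
        = ∑ i ∈ range (k + 1), (v ^ i * u ^ (k - i) + v ^ (k - i) * u ^ i) := by
          rw [sum_add_distrib, two_mul, ← sum_range_reflect (fun i ↦ v ^ i * u ^ (k - i))]
          refine congrArg _ (sum_congr rfl fun i hi ↦ ?_)
          rw [Nat.add_sub_cancel, Nat.sub_sub_self (Nat.le_of_lt_succ (mem_range.mp hi))]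
      _ ≤ ∑ _i ∈ range (k + 1), (v ^ k + u ^ k) :=
          sum_le_sum fun i hi ↦ hpair i (Nat.le_of_lt_succ (mem_range.mp hi))
      _ = (k + 1) * (v ^ k + u ^ k) := by simp [mul_add]
  nlinarith [sub_nonneg.mpr huv]

theorem pow_succ_sub_pow_succ_le_s16 {u v : ℝ} (hu : 0 ≤ u) (huv : u ≤ v) (k : ℕ) :
    v ^ (k + 1) - u ^ (k + 1) ≤ (k + 1) * (v - u) * v ^ k := by
  have := abs_pow_sub_pow_le v u (k + 1)
  rwa [abs_of_nonneg (sub_nonneg.mpr (pow_le_pow_left₀ hu huv _)), abs_of_nonneg (by linarith),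
    abs_of_nonneg (hu.trans huv), abs_of_nonneg hu, max_eq_left huv, Nat.add_sub_cancel,
    Nat.cast_succ, mul_comm (v - u)] at this

theorem lehmer_numerator_le_of_le (d : ℕ) {S b A : ℝ} (hS : 0 ≤ S) (hA : 0 ≤ A) (hAb : A ≤ b) :
    A ^ (d + 2) + (d + 2) / 2 * A ^ (d + 1) * (S + b) ≤
      (d + 2) * b * (A ^ (d + 1) + (d + 1) / 2 * A ^ d * S) := by
  have hb : 0 ≤ b := hA.trans hAb
  have hpow : A ^ (d + 2) ≤ b * A ^ (d + 1) := by
    rw [pow_succ']; exact mul_le_mul_of_nonneg_right hAb (by positivity)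
  have hpowS : A ^ (d + 1) * S ≤ b * A ^ d * S := by
    rw [pow_succ']
    exact mul_le_mul_of_nonneg_right (mul_le_mul_of_nonneg_right hAb (by positivity)) hS
  have hpow_nonneg : 0 ≤ (d : ℝ) * (b * A ^ (d + 1)) := by positivity
  have hpowS_nonneg : 0 ≤ (d : ℝ) * (d + 2) * (b * A ^ d * S) := by positivity
  nlinarith

theorem lehmer_numerator_le_sub_add (d : ℕ) {S b A : ℝ} (hS : 0 ≤ S) (hb : 0 ≤ b) (hbA : b ≤ A) :
    A ^ (d + 2) + (d + 2) / 2 * A ^ (d + 1) * (S + b) ≤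
      (A - b) ^ (d + 2) + (d + 2) / 2 * (A - b) ^ (d + 1) * (S + b) +
        (d + 2) * b * (A ^ (d + 1) + (d + 1) / 2 * A ^ d * S) := by
  have hB : 0 ≤ A - b := sub_nonneg.mpr hbA
  have htrap := two_mul_pow_sub_pow_le hB (sub_le_self A hb) (d + 1)
  have hmvt := mul_le_mul_of_nonneg_left (pow_succ_sub_pow_succ_le_s16 hB (sub_le_self A hb) d)
    (by positivity : (0 : ℝ) ≤ (d + 2) / 2 * S)
  push_cast at htrap
  simp only [sub_sub_cancel] at htrap hmvt
  linarith

@[elab_as_elim]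
theorem induction_on_nonneg_of_step {b : ℝ} (hb : 0 < b) {P : ℝ → Prop}
    (base : ∀ A, 0 ≤ A → A < b → P A) (step : ∀ A, b ≤ A → P (A - b) → P A)
    (A : ℝ) (hA : 0 ≤ A) : P A := by
  suffices ∀ n : ℕ, ∀ A, 0 ≤ A → A < n * b → P A from
    this (⌊A / b⌋₊ + 1) A hA (by
      rw [← div_lt_iff₀ hb]; push_cast; exact Nat.lt_floor_add_one _)
  intro n
  induction n with
  | zero => intro A hA hAn; simp at hAn; linarith
  | succ n ih =>
    intro A hA hAn
    rcases lt_or_ge A b with hAb | hbA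
    · exact base A hA hAb
    · exact step A hbA (ih _ (sub_nonneg.mpr hbA) (by push_cast at hAn; linarith))

noncomputable def lehmerBound {d : ℕ} (a : Fin (d + 1) → ℝ) (A : ℝ) : ℝ :=
  (A ^ (d + 1) + (d + 1) / 2 * A ^ d * ∑ j : Fin d, a j.succ) / ((d + 1)! * ∏ j, a j)

theorem lehmerBound_eq {d : ℕ} (a : Fin (d + 1) → ℝ) {A : ℝ} (hA : A ≠ 0) :
    lehmerBound a A = A ^ (d + 1) / ((d + 1)! * ∏ j, a j) *
      (1 + (d + 1) * (∑ j : Fin d, a j.succ) / (2 * A)) := by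
  rw [lehmerBound, mul_add, mul_one, mul_div_assoc', add_div]
  congr 1
  field_simp
  ring

theorem lehmerBound_succ {d : ℕ} (a : Fin (d + 2) → ℝ) (A : ℝ) :
    lehmerBound a A =
      (A ^ (d + 2) + (d + 2) / 2 * A ^ (d + 1) * (∑ j : Fin d, Fin.init a j.succ + a (Fin.last _)))
        / ((d + 2) * a (Fin.last _) * ((d + 1)! * ∏ j, Fin.init a j)) := by
  rw [lehmerBound, Fin.sum_univ_castSucc, Fin.prod_univ_castSucc, Nat.factorial_succ]
  simp only [Fin.succ_castSucc, Fin.succ_last, Fin.init]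
  push_cast
  ring

section LehmerBound

variable {d : ℕ} {a : Fin (d + 2) → ℝ}

theorem lehmerBound_le_init (ha : ∀ j, 0 < a j) {A : ℝ} (hA : 0 ≤ A) (hAb : A ≤ a (Fin.last _)) :
    lehmerBound a A ≤ lehmerBound (Fin.init a) A := by
  have hD : 0 < (d + 1)! * ∏ j, Fin.init a j :=
    mul_pos (by positivity) (prod_pos fun j _ ↦ ha _)
  have hb := ha (Fin.last _)
  rw [lehmerBound_succ, lehmerBound, div_le_div_iff₀ (by positivity) hD]
  have := mul_le_mul_of_nonneg_right
    (lehmer_numerator_le_of_le d (S := ∑ j : Fin d, Fin.init a j.succ)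
      (sum_nonneg fun j _ ↦ (ha _).le) hA hAb) hD.le
  linarith

theorem lehmerBound_le_init_add (ha : ∀ j, 0 < a j) {A : ℝ} (hbA : a (Fin.last _) ≤ A) :
    lehmerBound a A ≤ lehmerBound (Fin.init a) A + lehmerBound a (A - a (Fin.last _)) := by
  have hD : 0 < (d + 1)! * ∏ j, Fin.init a j :=
    mul_pos (by positivity) (prod_pos fun j _ ↦ ha _)
  have hb := ha (Fin.last _)
  rw [lehmerBound_succ, lehmerBound_succ, lehmerBound, add_comm (_ / _),
    ← mul_div_mul_left _ (_ * ∏ j, Fin.init a j) (by positivity : (d + 2) * a (Fin.last _) ≠ 0),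
    ← add_div]
  exact div_le_div_of_nonneg_right
    (lehmer_numerator_le_sub_add d (sum_nonneg fun j _ ↦ (ha _).le) hb.le hbA) (by positivity)

end LehmerBound

theorem lehmerBound_lt_card_simplexLatticePoints {d : ℕ} (a : Fin (d + 1) → ℝ)
    (ha : ∀ j, 0 < a j) {A : ℝ} (hA : 0 ≤ A) :
    lehmerBound a A < #(simplexLatticePoints a A) := by
  induction d generalizing A with
  | zero =>
    have hb := ha (Fin.last 0)
    have hbound (A : ℝ) : lehmerBound a A = A / a (Fin.last 0) := by simp [lehmerBound]
    have hcard {A : ℝ} (hA : 0 ≤ A) : (#(simplexLatticePoints a A) : ℝ) =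
        1 + #(simplexLatticePoints a (A - a (Fin.last 0))) := by
      rw [card_simplexLatticePoints_succ ha, card_simplexLatticePoints_zero _ hA, Nat.cast_add,
        Nat.cast_one]
    refine induction_on_nonneg_of_step hb (fun A hA hAb ↦ ?_) (fun A hbA ih ↦ ?_) A hA
    · rw [hbound, hcard hA]
      exact ((div_lt_one hb).mpr hAb).trans_le (le_add_of_nonneg_right (Nat.cast_nonneg _))
    · rw [hbound] at ih ⊢
      rw [hcard (hb.le.trans hbA), add_comm]
      calc A / a (Fin.last 0) = (A - a (Fin.last 0)) / a (Fin.last 0) + 1 := by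
            field_simp; ring
        _ < _ := add_lt_add_left ih 1
  | succ d ih =>
    have hinit : ∀ j, 0 < Fin.init a j := fun j ↦ ha _
    refine induction_on_nonneg_of_step (ha (Fin.last _)) (fun A hA hAb ↦ ?_) (fun A hbA hlt ↦ ?_) A hA
    · calc lehmerBound a A ≤ lehmerBound (Fin.init a) A := lehmerBound_le_init ha hA hAb.le
        _ < #(simplexLatticePoints (Fin.init a) A) := ih _ hinit hA
        _ ≤ #(simplexLatticePoints a A) := by
          rw [card_simplexLatticePoints_succ ha A, Nat.cast_add]
          exact le_add_of_nonneg_right (Nat.cast_nonneg _)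
    · calc lehmerBound a A
          ≤ lehmerBound (Fin.init a) A + lehmerBound a (A - a (Fin.last _)) :=
            lehmerBound_le_init_add ha hbA
        _ < #(simplexLatticePoints (Fin.init a) A) +
              #(simplexLatticePoints a (A - a (Fin.last _))) :=
            add_lt_add (ih _ hinit ((ha _).le.trans hbA)) hlt
        _ = #(simplexLatticePoints a A) := by rw [card_simplexLatticePoints_succ ha A, Nat.cast_add]

section SmoothNumbers

variable {s : ℕ} {p : Fin s → ℕ}

theorem factorization_prod_pow_apply (hp : ∀ j, (p j).Prime) (hinj : Function.Injective p)
    (x : Fin s → ℕ) (i : Fin s) : (∏ j, p j ^ x j).factorization (p i) = x i := by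
  rw [Nat.factorization_prod fun j _ ↦ pow_ne_zero _ (hp j).ne_zero, Finset.sum_apply',
    Finset.sum_eq_single i]
  · simp [(hp i).factorization_pow]
  · intro j _ hji
    simp [(hp j).factorization_pow, hinj.ne hji]
  · simp

theorem prod_pow_injective (hp : ∀ j, (p j).Prime) (hinj : Function.Injective p) :
    Function.Injective fun x : Fin s → ℕ ↦ ∏ j, p j ^ x j := fun x y h ↦ funext fun i ↦ by
  simpa only [factorization_prod_pow_apply hp hinj] using congrArg (·.factorization (p i)) h

theorem eq_of_prime_dvd_prod_pow (hp : ∀ j, (p j).Prime) (x : Fin s → ℕ) {ℓ : ℕ} (hℓ : ℓ.Prime)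
    (hdvd : ℓ ∣ ∏ j, p j ^ x j) : ∃ j, ℓ = p j := by
  obtain ⟨j, _, hj⟩ := (Prime.dvd_finsetProd_iff hℓ.prime _).mp hdvd
  exact ⟨j, (Nat.prime_dvd_prime_iff_eq hℓ (hp j)).mp (hℓ.dvd_of_dvd_pow hj)⟩

theorem prod_pow_le_of_mem_simplexLatticePoints (hp : ∀ j, (p j).Prime) {T : ℕ} (hT : 0 < T)
    {x : Fin s → ℕ} (hx : x ∈ simplexLatticePoints (fun j ↦ Real.log (p j)) (Real.log T)) :
    ∏ j, p j ^ x j ≤ T := by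
  have hpos : ∀ j, (0 : ℝ) < p j := fun j ↦ by exact_mod_cast (hp j).pos
  rw [mem_simplexLatticePoints fun j ↦ Real.log_pos (by exact_mod_cast (hp j).one_lt)] at hx
  rw [← Nat.cast_le (α := ℝ), ← Real.log_le_log_iff
    (by exact_mod_cast prod_pos fun j _ ↦ pow_pos (hp j).pos _) (by positivity)]
  push_cast
  rwa [Real.log_prod fun j _ ↦ (pow_pos (hpos j) _).ne', sum_congr rfl fun j _ ↦ Real.log_pow _ _]

theorem card_simplexLatticePoints_mul_totient_le (F : Type*) [Field F] [Fintype F]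
    (hp : ∀ j, (p j).Prime) (hinj : Function.Injective p)
    (hdvd : ∀ j, p j ∣ Fintype.card F - 1) (hmod : Fintype.card F % 4 ≠ 3) {T : ℕ} (hT : 0 < T) :
    #(simplexLatticePoints (fun j ↦ Real.log (p j)) (Real.log T)) * φ (Fintype.card F - 1) ≤
      ∑ t ∈ Icc 1 T, Nbin F t := by
  set L := simplexLatticePoints (fun j ↦ Real.log (p j)) (Real.log T)
  have hpos (x : Fin s → ℕ) : 0 < ∏ j, p j ^ x j := prod_pos fun j _ ↦ pow_pos (hp j).pos _
  calc #L * φ (Fintype.card F - 1)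
      = ∑ _t ∈ L.image fun x ↦ ∏ j, p j ^ x j, φ (Fintype.card F - 1) := by
        rw [sum_const, card_image_of_injective _ (prod_pow_injective hp hinj), smul_eq_mul]
    _ ≤ ∑ t ∈ L.image fun x ↦ ∏ j, p j ^ x j, Nbin F t := by
        refine sum_le_sum fun t ht ↦ ?_
        obtain ⟨x, -, rfl⟩ := mem_image.mp ht
        refine totient_le_nbin F (hpos x).ne' (fun ℓ hℓ hℓt ↦ ?_) fun _ ↦ hmod
        obtain ⟨j, rfl⟩ := eq_of_prime_dvd_prod_pow hp x hℓ hℓt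
        exact hdvd j
    _ ≤ ∑ t ∈ Icc 1 T, Nbin F t := by
        refine sum_le_sum_of_subset (image_subset_iff.mpr fun x hx ↦ ?_)
        exact mem_Icc.mpr ⟨hpos x, prod_pow_le_of_mem_simplexLatticePoints hp hT hx⟩

end SmoothNumbers

theorem stmt_16 (q : ℕ) (hmod : q % 4 ≠ 3)
    (F : Type*) [Field F] [Fintype F] (hcard : Fintype.card F = q)
    (s : ℕ) (hs : 2 ≤ s) (p : Fin s → ℕ) (α : Fin s → ℕ) (hp : ∀ j, (p j).Prime)
    (hinj : Function.Injective p) (hα : ∀ j, 1 ≤ α j)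
    (hfac : q - 1 = ∏ j, p j ^ α j) (T : ℕ) (hT : 1 < T) :
    (∑ t ∈ Finset.Icc 1 T, (Nbin F t : ℝ)) >
      (Nat.totient (q - 1) : ℝ) / ((s.factorial : ℝ) * ∏ j, Real.log (p j)) *
        (Real.log T) ^ s *
        (1 + (s : ℝ) * Real.log ((∏ j, (p j : ℝ)) / (p ⟨0, by omega⟩ : ℝ)) /
          (2 * Real.log T)) := by
  subst hcard
  obtain ⟨d, rfl⟩ : ∃ d, s = d + 1 := ⟨s - 1, by omega⟩
  have hp0 (j : Fin (d + 1)) : (p j : ℝ) ≠ 0 := by exact_mod_cast (hp j).ne_zero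
  have hlog (j : Fin (d + 1)) : 0 < Real.log (p j) :=
    Real.log_pos (by exact_mod_cast (hp j).one_lt)
  have hA : 0 < Real.log T := Real.log_pos (by exact_mod_cast hT)
  have hdvd (j : Fin (d + 1)) : p j ∣ Fintype.card F - 1 :=
    hfac ▸ (dvd_pow_self _ (by have := hα j; omega)).trans (dvd_prod_of_mem _ (mem_univ j))
  have hφ : 0 < φ (Fintype.card F - 1) :=
    Nat.totient_pos.mpr (by have := Fintype.one_lt_card (α := F); omega)
  calc _ = (φ (Fintype.card F - 1) : ℝ) * lehmerBound (fun j ↦ Real.log (p j)) (Real.log T) := by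
        rw [lehmerBound_eq _ hA.ne', Fin.mk_zero,
          Real.log_div (prod_ne_zero_iff.mpr fun j _ ↦ hp0 j) (hp0 0),
          Real.log_prod fun j _ ↦ hp0 j, Fin.sum_univ_succ]
        push_cast
        ring
    _ < φ (Fintype.card F - 1) * #(simplexLatticePoints (fun j ↦ Real.log (p j)) (Real.log T)) :=
        mul_lt_mul_of_pos_left (lehmerBound_lt_card_simplexLatticePoints _ hlog hA.le)
          (by exact_mod_cast hφ)
    _ ≤ ∑ t ∈ Icc 1 T, (Nbin F t : ℝ) := by
        rw [mul_comm]
        exact_mod_cast card_simplexLatticePoints_mul_totient_le F hp hinj hdvd hmod (by omega)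
end
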